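/- Let F : ℝⁿ × ℝᵐ → ℝ be continuous, and let g : ℝⁿ → ℝᵐ be continuous with g(x) the unique minimizer of F(x,·) for each x. If (a, g(a)) is a strict local minimum of the minimal section x ↦ F(x, g(x)) in the sense that a strictly minimizes it in a neighborhood, and g(a) uniquely minimizes F(a,·), then (a, g(a)) is a local minimum of F on ℝⁿ × ℝᵐ. -/
import Mathlib


theorem stmt_16 (n m : ℕ) (F : (Fin n → ℝ) × (Fin m → ℝ) → ℝ)
    (hFcont : Continuous F)
    (g : (Fin n → ℝ) → (Fin m → ℝ)) (hgcont : Continuous g)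
    (hg : ∀ x y, F (x, g x) ≤ F (x, y))
    (a : Fin n → ℝ)
    (hloc : ∃ U ∈ nhds a, ∀ x ∈ U, x ≠ a → F (a, g a) < F (x, g x))
    (huniq : ∀ y : Fin m → ℝ, y ≠ g a → F (a, g a) < F (a, y)) :
    ∃ W ∈ nhds ((a, g a) : (Fin n → ℝ) × (Fin m → ℝ)),
      ∀ p ∈ W, F (a, g a) ≤ F p := by
  obtain ⟨U, hU, h⟩ := hloc
  refine ⟨U ×ˢ Set.univ, prod_mem_nhds hU Filter.univ_mem, ?_⟩
  rintro ⟨x, y⟩ ⟨hx, -⟩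
  by_cases hxa : x = a
  · subst hxa; exact hg x y
  · exact le_trans (h x hx hxa).le (hg x y)
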